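/- For 0 < r ≤ 1 and all real x ≥ 1, the function f(x) = x(1 + 1/x)^r satisfies f(x+1) − f(x) ≥ 1. -/
import Mathlib


theorem f_difference_ge_one (r : ℝ) (hr0 : 0 < r) (hr1 : r ≤ 1) (x : ℝ) (hx : 1 ≤ x) :
    (x + 1) * (1 + 1 / (x + 1)) ^ r - x * (1 + 1 / x) ^ r ≥ 1 := by
  have hx0 : (0:ℝ) < x := lt_of_lt_of_le one_pos hx
  have ha0 : (0:ℝ) < x + 1 := by linarith
  have hb0 : (0:ℝ) < x + 2 := by linarith
  have h1r : (0:ℝ) ≤ 1 - r := by linarith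
  have amgm : ∀ p q : ℝ, 0 ≤ p → 0 ≤ q → p ^ (1-r) * q ^ r ≤ (1-r)*p + r*q := fun p q hp hq =>
    Real.geom_mean_le_arith_mean2_weighted h1r hr0.le hp hq (by ring)
  have key : ∀ y : ℝ, 0 < y → y * (1 + 1/y) ^ r = y ^ (1-r) * (y+1) ^ r := by
    intro y hy
    have h1 : 1 + 1/y = (y+1)/y := by field_simp
    rw [h1, Real.div_rpow (by linarith) hy.le, Real.rpow_sub hy, Real.rpow_one]
    have : (y:ℝ) ^ r ≠ 0 := (Real.rpow_pos_of_pos hy r).ne'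
    field_simp
  rw [key x hx0, key (x+1) ha0]
  have hxa2 : x + 1 + 1 = x + 2 := by ring
  rw [hxa2]
  set a := x + 1
  set b := x + 2
  set G := a ^ (1-r) * b ^ r with hG
  have hGpos : 0 < G := by positivity
  have har : (0:ℝ) < a ^ r := Real.rpow_pos_of_pos ha0 r
  have har' : (0:ℝ) < a ^ (1-r) := Real.rpow_pos_of_pos ha0 (1-r)
  have hbr : (0:ℝ) < b ^ r := Real.rpow_pos_of_pos hb0 r
  have hbr' : (0:ℝ) < b ^ (1-r) := Real.rpow_pos_of_pos hb0 (1-r)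
  -- inequality 1 : x^(1-r)*a^r ≤ G * ((1-r)*(x/a) + r*(a/b))
  have i1 : x ^ (1-r) * a ^ r ≤ G * ((1-r)*(x/a) + r*(a/b)) := by
    have h := amgm (x/a) (a/b) (by positivity) (by positivity)
    have heq : G * ((x/a) ^ (1-r) * (a/b) ^ r) = x ^ (1-r) * a ^ r := by
      rw [Real.div_rpow hx0.le ha0.le, Real.div_rpow ha0.le hb0.le, hG]
      field_simp
    calc x ^ (1-r) * a ^ r = G * ((x/a) ^ (1-r) * (a/b) ^ r) := heq.symm
      _ ≤ G * ((1-r)*(x/a) + r*(a/b)) := by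
          exact mul_le_mul_of_nonneg_left h hGpos.le
  -- inequality 2 : 1 ≤ G * ((1-r)/a + r/b)
  have i2 : 1 ≤ G * ((1-r)/a + r/b) := by
    have h := amgm ((b/a)^r) ((a/b)^(1-r)) (by positivity) (by positivity)
    have hone : ((b/a)^r) ^ (1-r) * ((a/b)^(1-r)) ^ r = 1 := by
      rw [← Real.rpow_mul (by positivity), ← Real.rpow_mul (by positivity), mul_comm (1-r) r,
        ← Real.mul_rpow (by positivity) (by positivity)]
      have : b/a * (a/b) = 1 := by field_simp
      rw [this, Real.one_rpow]
    rw [hone] at h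
    have heq : G * ((1-r)/a + r/b) = (1-r)*((b/a)^r) + r*((a/b)^(1-r)) := by
      rw [Real.div_rpow hb0.le ha0.le, Real.div_rpow ha0.le hb0.le, hG]
      have hab : a ^ (1-r) * a ^ r = a := by
        rw [← Real.rpow_add ha0]; norm_num
      have hbb : b ^ r * b ^ (1-r) = b := by
        rw [← Real.rpow_add hb0]; norm_num
      field_simp
      linear_combination ((1-r)*b*(b^r*b^(1-r)))*hab + (r*a*(a^(1-r)*a^r))*hbb
    rw [heq]
    exact h
  have hsplit : G * ((1-r)*(x/a) + r*(a/b)) + G * ((1-r)/a + r/b) = G := by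
    have hc : ((1-r)*(x/a) + r*(a/b)) + ((1-r)/a + r/b) = 1 := by
      field_simp
      ring
    calc G * ((1-r)*(x/a) + r*(a/b)) + G * ((1-r)/a + r/b)
        = G * (((1-r)*(x/a) + r*(a/b)) + ((1-r)/a + r/b)) := by ring
      _ = G := by rw [hc, mul_one]
  linarith [i1, i2, hsplit]
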